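/- arXiv:2604.09423 — 7 statements merged into one kernel-verified Lean document; each statement's English description precedes it below -/
import Mathlib

section
/- For any schedule π, err(π) = Σ_{(j,j') : μ_j > μ_{j'}} (μ_j − μ_{j'})·1{π(j) < π(j')}, where the sum is over all ordered pairs of jobs (j, j') with μ_j > μ_{j'} and 1{π(j) < π(j')} is the indicator that π schedules job j before job j'. -/
/-!
Since `n - π j = 1 + #{j' | π j < π j'}`, the cost is `∑ μ + ∑_{π j < π j'} μ j`. Subtracting
the inversion weight replaces each summand `μ j` by `min (μ j) (μ j')`, and as `min` is symmetric
the sum over the pairs ordered by `π` is half the sum over all pairs of distinct jobs, whatever `π`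
is. Hence cost minus inversion weight does not depend on the schedule. The inversion weight is
nonnegative and vanishes on the schedule that runs the jobs by increasing `μ`, so that schedule is
optimal and the error of any schedule is its inversion weight.
-/

open Finset

section Symmetrization

variable {α β M : Type*} [Fintype α] [DecidableEq α] [LinearOrder β] [AddCommMonoid M]

theorem sum_sum_ite_lt_add_self {ρ : α → β} (hρ : Function.Injective ρ) {f : α → α → M}
    (hf : ∀ a b, f a b = f b a) :
    (∑ a, ∑ b, if ρ a < ρ b then f a b else 0) + ∑ a, ∑ b, (if ρ a < ρ b then f a b else 0) =
      ∑ a, ∑ b, if a = b then 0 else f a b := by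
  nth_rw 2 [sum_comm]
  simp only [← sum_add_distrib]
  refine sum_congr rfl fun a _ => sum_congr rfl fun b _ => ?_
  rcases eq_or_ne a b with rfl | hab
  · simp
  rcases (hρ.ne hab).lt_or_gt with h | h
  · simp [h, h.not_gt, hab]
  · simp [h, h.not_gt, hab, hf b a]

end Symmetrization

theorem ite_sub_ite_and_lt {R : Type*} [Ring R] [LinearOrder R] [IsOrderedAddMonoid R]
    (p : Prop) [Decidable p] (a b : R) :
    ((if p then a else 0) - if b < a ∧ p then a - b else 0) = if p then min a b else 0 := by
  by_cases hp : p
  · rcases lt_or_ge b a with h | h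
    · simp [hp, h, min_eq_right h.le]
    · simp [hp, h.not_gt, min_eq_left h]
  · simp [hp]

namespace Schedule

variable {n : ℕ}

theorem sum_ite_perm_lt (ρ : Equiv.Perm (Fin n)) (j : Fin n) (x : ℝ) :
    (∑ j', if ρ j < ρ j' then x else 0) = ((n : ℝ) - 1 - (ρ j : ℕ)) * x := by
  rw [Equiv.sum_comp ρ (fun k => if ρ j < k then x else 0), sum_ite, sum_const_zero,
    add_zero, sum_const, nsmul_eq_mul, filter_lt_eq_Ioi, Fin.card_Ioi]
  have := (ρ j).is_lt
  rw [Nat.cast_sub (by omega), Nat.cast_sub (by omega)]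
  simp

variable (μ : Fin n → ℝ)

def completionCost (ρ : Equiv.Perm (Fin n)) : ℝ :=
  ∑ j, ((n : ℝ) - (ρ j : ℕ)) * μ j

noncomputable def inversionWeight (ρ : Equiv.Perm (Fin n)) : ℝ :=
  ∑ j, ∑ j', if μ j' < μ j ∧ ρ j < ρ j' then μ j - μ j' else 0

theorem completionCost_eq (ρ : Equiv.Perm (Fin n)) :
    completionCost μ ρ = ∑ j, μ j + ∑ j, ∑ j', if ρ j < ρ j' then μ j else 0 := by
  simp only [completionCost, sum_ite_perm_lt, ← sum_add_distrib]
  exact sum_congr rfl fun j _ => by ring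

theorem completionCost_sub_inversionWeight (ρ : Equiv.Perm (Fin n)) :
    completionCost μ ρ - inversionWeight μ ρ =
      ∑ j, μ j + ∑ j, ∑ j', if ρ j < ρ j' then min (μ j) (μ j') else 0 := by
  simp only [completionCost_eq, inversionWeight, add_sub_assoc, ← sum_sub_distrib,
    ite_sub_ite_and_lt]

theorem completionCost_sub_inversionWeight_eq (ρ σ : Equiv.Perm (Fin n)) :
    completionCost μ ρ - inversionWeight μ ρ = completionCost μ σ - inversionWeight μ σ := by
  have hmin : ∀ j j', min (μ j) (μ j') = min (μ j') (μ j) := fun _ _ => min_comm _ _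
  have hρ := sum_sum_ite_lt_add_self ρ.injective hmin
  have hσ := sum_sum_ite_lt_add_self σ.injective hmin
  rw [completionCost_sub_inversionWeight, completionCost_sub_inversionWeight]
  linarith

theorem inversionWeight_nonneg (ρ : Equiv.Perm (Fin n)) : 0 ≤ inversionWeight μ ρ :=
  sum_nonneg fun j _ => sum_nonneg fun j' _ => by
    split_ifs with h
    · exact sub_nonneg.2 h.1.le
    · exact le_rfl

theorem inversionWeight_sort_inv : inversionWeight μ (Tuple.sort μ)⁻¹ = 0 := by
  refine sum_eq_zero fun j _ => sum_eq_zero fun j' _ => if_neg ?_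
  rintro ⟨hμ, hpos⟩
  have := Tuple.monotone_sort μ hpos.le
  simp only [Equiv.Perm.coe_inv, Function.comp_apply, Equiv.apply_symm_apply] at this
  exact this.not_gt hμ

theorem completionCost_sub_completionCost_sort_inv (ρ : Equiv.Perm (Fin n)) :
    completionCost μ ρ - completionCost μ (Tuple.sort μ)⁻¹ = inversionWeight μ ρ := by
  linarith [completionCost_sub_inversionWeight_eq μ ρ (Tuple.sort μ)⁻¹,
    inversionWeight_sort_inv μ]

theorem completionCost_sort_inv_le (ρ : Equiv.Perm (Fin n)) :
    completionCost μ (Tuple.sort μ)⁻¹ ≤ completionCost μ ρ := by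
  linarith [completionCost_sub_completionCost_sort_inv μ ρ, inversionWeight_nonneg μ ρ]

end Schedule

theorem error_decomposition_general
    (n : ℕ) (μ : Fin n → ℝ)
    (cost : Equiv.Perm (Fin n) → ℝ)
    (hcost : ∀ π : Equiv.Perm (Fin n), cost π = ∑ j, ((n : ℝ) - (π j : ℕ)) * μ j)
    (OPT : ℝ)
    (hOPT : OPT = Finset.univ.inf' Finset.univ_nonempty cost)
    (π : Equiv.Perm (Fin n)) :
    cost π - OPT =
      ∑ j : Fin n, ∑ j' : Fin n,
        if μ j' < μ j ∧ π j < π j' then μ j - μ j' else 0 := by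
  obtain rfl : cost = Schedule.completionCost μ := funext hcost
  have hOPT_eq : OPT = Schedule.completionCost μ (Tuple.sort μ)⁻¹ := hOPT ▸
    le_antisymm (inf'_le _ (mem_univ _))
      (le_inf' _ _ fun ρ _ => Schedule.completionCost_sort_inv_le μ ρ)
  rw [hOPT_eq, Schedule.completionCost_sub_completionCost_sort_inv]
  rfl

/-- Error decomposition: for any schedule `π`, the excess expected total completion
time over the optimum equals the sum of `μ_j − μ_{j'}` over all inverted pairs, i.e.
pairs `(j, j')` with `μ_j > μ_{j'}` scheduled with `π(j) < π(j')`. -/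
theorem error_decomposition
    (n : ℕ) (hn : 1 ≤ n) (μ : Fin n → ℝ) (hμ : ∀ j, μ j ∈ Set.Icc (0 : ℝ) 1)
    (cost : Equiv.Perm (Fin n) → ℝ)
    (hcost : ∀ π : Equiv.Perm (Fin n), cost π = ∑ j, ((n : ℝ) - (π j : ℕ)) * μ j)
    (OPT : ℝ)
    (hOPT : OPT = Finset.univ.inf' Finset.univ_nonempty cost)
    (π : Equiv.Perm (Fin n)) :
    cost π - OPT =
      ∑ j : Fin n, ∑ j' : Fin n,
        if μ j' < μ j ∧ π j < π j' then μ j - μ j' else 0 :=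
  error_decomposition_general n μ cost hcost OPT hOPT π
end

section
/- Let ε ∈ (0,1) and let π be a schedule with cost(π) > (1+ε)·OPT. Then there exist jobs j, j' with μ_j > μ_{j'} and π(j) < π(j') such that μ_j − μ_{j'} ≥ ε·cost(π)/n². -/
/-!
Charge each ordered pair of jobs `(j, k)` with `j` scheduled before `k` the size `μ j`; together
with the job's own size this accounts exactly for its weight `n - π j`. The charge of a pair
depends on the schedule only through the size of whichever job comes first, so comparing `π`
with the sorted schedule `σ` (which is optimal) gives
`cost π - OPT = ∑_{π j < π k} (μ j - μ k)⁺`, a sum over fewer than `n² / 2` pairs whose nonzero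
terms are exactly the gaps of the inversions of `π`. If all these gaps were below
`ε·cost π / n²`, then `cost π - OPT < ε·cost π / 2`, which contradicts `cost π > (1 + ε)·OPT`
for `ε < 1`.
-/

open Finset Function

section OrderedPairs

variable {ι α M : Type*} [Fintype ι] [DecidableEq ι] [LinearOrder α] [AddCommMonoid M]

theorem sum_ite_lt_add_sum_ite_gt {τ : ι → α} (hτ : Injective τ) (f : ι → ι → M) :
    ∑ j, ∑ k, (if τ j < τ k then f j k else 0) + ∑ j, ∑ k, (if τ k < τ j then f j k else 0) =
      ∑ j, ∑ k, if j ≠ k then f j k else 0 := by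
  simp only [← sum_add_distrib]
  refine sum_congr rfl fun j _ => sum_congr rfl fun k _ => ?_
  rcases eq_or_ne j k with rfl | hjk
  · simp
  · rcases (hτ.ne hjk).lt_or_gt with h | h <;> simp [h, h.not_gt, hjk]

theorem two_nsmul_sum_ite_lt_of_symm {τ : ι → α} (hτ : Injective τ) {f : ι → ι → M}
    (hf : ∀ j k, f j k = f k j) :
    2 • ∑ j, ∑ k, (if τ j < τ k then f j k else 0) = ∑ j, ∑ k, if j ≠ k then f j k else 0 := by
  rw [← sum_ite_lt_add_sum_ite_gt hτ f, two_nsmul, sum_comm]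
  simp only [hf]

theorem sum_ite_lt_eq_of_symm [IsAddTorsionFree M] {τ τ' : ι → α} (hτ : Injective τ)
    (hτ' : Injective τ') {f : ι → ι → M} (hf : ∀ j k, f j k = f k j) :
    ∑ j, ∑ k, (if τ j < τ k then f j k else 0) = ∑ j, ∑ k, if τ' j < τ' k then f j k else 0 :=
  nsmul_right_injective two_ne_zero <| by
    simp only [two_nsmul_sum_ite_lt_of_symm hτ hf, two_nsmul_sum_ite_lt_of_symm hτ' hf]

end OrderedPairs

section Scheduling

variable {n : ℕ} (μ : Fin n → ℝ)

def totalCompletionTime (τ : Equiv.Perm (Fin n)) : ℝ :=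
  ∑ j, ((n : ℝ) - (τ j : ℕ)) * μ j

theorem totalCompletionTime_nonneg (hμ : ∀ j, 0 ≤ μ j) (τ : Equiv.Perm (Fin n)) :
    0 ≤ totalCompletionTime μ τ :=
  sum_nonneg fun j _ => mul_nonneg (by simp [(τ j).isLt.le]) (hμ j)

theorem totalCompletionTime_eq_sum_add_sum_ite_lt (τ : Equiv.Perm (Fin n)) :
    totalCompletionTime μ τ = ∑ j, μ j + ∑ j, ∑ k, if τ j < τ k then μ j else 0 := by
  rw [totalCompletionTime, ← sum_add_distrib]
  refine sum_congr rfl fun j _ => ?_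
  have hlater : ∑ k, (if τ j < τ k then μ j else 0) = ((n - 1 - τ j : ℕ) : ℝ) * μ j := by
    rw [Equiv.sum_comp τ (fun k => if τ j < k then μ j else 0), ← sum_filter, filter_lt_eq_Ioi,
      sum_const, Fin.card_Ioi, nsmul_eq_mul]
  have hlt : (τ j : ℕ) + 1 ≤ n := (τ j).isLt
  rw [hlater, Nat.sub_sub, Nat.cast_sub (by omega)]
  push_cast
  ring

theorem totalCompletionTime_sub_of_monotone (π : Equiv.Perm (Fin n)) {σ : Equiv.Perm (Fin n)}
    (hσ : Monotone (μ ∘ σ.symm)) :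
    totalCompletionTime μ π - totalCompletionTime μ σ =
      ∑ j, ∑ k, if π j < π k then max (μ j - μ k) 0 else 0 := by
  have hmin : ∀ j k, σ j < σ k → min (μ j) (μ k) = μ j := fun j k h =>
    min_eq_left (by simpa using hσ h.le)
  have hsorted : (∑ j, ∑ k, if σ j < σ k then μ j else 0) =
      ∑ j, ∑ k, if π j < π k then min (μ j) (μ k) else 0 := by
    rw [← sum_ite_lt_eq_of_symm σ.injective π.injective fun j k => min_comm (μ j) (μ k)]
    refine sum_congr rfl fun j _ => sum_congr rfl fun k _ => ?_
    split_ifs with h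
    · exact (hmin j k h).symm
    · rfl
  rw [totalCompletionTime_eq_sum_add_sum_ite_lt, totalCompletionTime_eq_sum_add_sum_ite_lt,
    hsorted, add_sub_add_left_eq_sub]
  simp only [← sum_sub_distrib]
  refine sum_congr rfl fun j _ => sum_congr rfl fun k _ => ?_
  split_ifs
  · rcases le_total (μ j) (μ k) with h | h <;> simp [h]
  · exact sub_zero 0

theorem totalCompletionTime_le_of_monotone {σ : Equiv.Perm (Fin n)} (hσ : Monotone (μ ∘ σ.symm))
    (τ : Equiv.Perm (Fin n)) : totalCompletionTime μ σ ≤ totalCompletionTime μ τ := by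
  rw [← sub_nonneg, totalCompletionTime_sub_of_monotone μ τ hσ]
  exact sum_nonneg fun j _ => sum_nonneg fun k _ => by split_ifs <;> simp

theorem two_mul_totalCompletionTime_sub_le (π : Equiv.Perm (Fin n)) {σ : Equiv.Perm (Fin n)}
    (hσ : Monotone (μ ∘ σ.symm)) {g : ℝ} (hg : 0 ≤ g)
    (hgap : ∀ j k, μ k < μ j → π j < π k → μ j - μ k ≤ g) :
    2 * (totalCompletionTime μ π - totalCompletionTime μ σ) ≤ n ^ 2 * g := by
  rw [totalCompletionTime_sub_of_monotone μ π hσ]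
  calc 2 * ∑ j, ∑ k, (if π j < π k then max (μ j - μ k) 0 else 0)
      ≤ 2 * ∑ j, ∑ k, (if π j < π k then g else 0) := by
        gcongr with j _ k _
        split_ifs with hjk
        · refine max_le ?_ hg
          rcases lt_or_ge (μ k) (μ j) with h | h
          · exact hgap j k h hjk
          · linarith
        · rfl
    _ = ∑ j, ∑ k, if j ≠ k then g else 0 := by
        rw [← two_nsmul_sum_ite_lt_of_symm π.injective fun _ _ => rfl, two_nsmul, two_mul]
    _ ≤ ∑ _j : Fin n, ∑ _k : Fin n, g := by
        gcongr
        split_ifs <;> simp [hg]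
    _ = n ^ 2 * g := by simp [sq, mul_assoc]

end Scheduling

/-- If a schedule `π` has `cost(π) > (1+ε)·OPT` with `ε ∈ (0,1)`, then there is an
inverted pair of jobs `j, j'` (with `μ_j > μ_{j'}` and `π(j) < π(j')`) whose gap
satisfies `μ_j − μ_{j'} ≥ ε·cost(π)/n²`. -/
theorem large_gap_inversion_exists
    (n : ℕ) (hn : 1 ≤ n) (μ : Fin n → ℝ) (hμ : ∀ j, μ j ∈ Set.Icc (0 : ℝ) 1)
    (cost : Equiv.Perm (Fin n) → ℝ)
    (hcost : ∀ π : Equiv.Perm (Fin n), cost π = ∑ j, ((n : ℝ) - (π j : ℕ)) * μ j)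
    (OPT : ℝ)
    (hOPT : OPT = Finset.univ.inf' Finset.univ_nonempty cost)
    (ε : ℝ) (hε : ε ∈ Set.Ioo (0 : ℝ) 1)
    (π : Equiv.Perm (Fin n)) (hπ : (1 + ε) * OPT < cost π) :
    ∃ j j' : Fin n, μ j' < μ j ∧ π j < π j' ∧
      ε * cost π / (n : ℝ) ^ 2 ≤ μ j - μ j' := by
  obtain ⟨hε0, hε1⟩ := hε
  by_contra! hsmall
  obtain rfl : cost = totalCompletionTime μ := funext hcost
  set σ := (Tuple.sort μ).symm
  have hσ : Monotone (μ ∘ σ.symm) := by simpa [σ] using Tuple.monotone_sort μ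
  have hσ_opt : OPT = totalCompletionTime μ σ := hOPT ▸ le_antisymm (inf'_le _ (mem_univ σ))
    (le_inf' _ _ fun τ _ => totalCompletionTime_le_of_monotone μ hσ τ)
  have hOPT_nonneg : 0 ≤ OPT := hσ_opt ▸ totalCompletionTime_nonneg μ (fun j => (hμ j).1) σ
  have hcost_pos : 0 < totalCompletionTime μ π := by nlinarith
  have hn_pos : (0 : ℝ) < n := by exact_mod_cast hn
  have hgap := two_mul_totalCompletionTime_sub_le μ π hσ (g := ε * totalCompletionTime μ π / n ^ 2)
    (by positivity) fun j k h h' => (hsmall j k h h').le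
  rw [← hσ_opt, mul_div_cancel₀ _ (by positivity)] at hgap
  nlinarith [mul_pos (mul_pos hε0 hcost_pos) (sub_pos.2 hε1)]
end

section
/- Let ε ∈ (0,1) and let π be a schedule with cost(π) > (1+ε)·OPT. Then there exist jobs j ≠ j' such that the schedule π' obtained from π by swapping the positions of j and j' satisfies cost(π') ≤ (1 − ε/n²)·cost(π). -/
private lemma perm_val_eq_card (n : ℕ) (e : Equiv.Perm (Fin n)) (j : Fin n) :
    ((e j : ℕ) : ℝ) = ∑ k, (if e k < e j then (1 : ℝ) else 0) := by
  rw [Finset.sum_boole]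
  congr 1
  have himg : Finset.univ.filter (fun k => e k < e j)
      = (Finset.Iio (e j)).image e.symm := by
    ext k
    simp only [Finset.mem_filter, Finset.mem_univ, true_and, Finset.mem_image,
      Finset.mem_Iio]
    constructor
    · intro h
      exact ⟨e k, h, e.symm_apply_apply k⟩
    · rintro ⟨i, hi, rfl⟩
      simpa using hi
  rw [himg, Finset.card_image_of_injective _ e.symm.injective, Fin.card_Iio]

/-- Swap lemma for completion-time scheduling: if `cost(π) > (1+ε)·OPT` with
`ε ∈ (0,1)`, then swapping the positions of some pair of distinct jobs yields a
schedule `π'` with `cost(π') ≤ (1 − ε/n²)·cost(π)`. -/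
theorem swap_improving_move
    (n : ℕ) (hn : 1 ≤ n) (μ : Fin n → ℝ) (hμ : ∀ j, μ j ∈ Set.Icc (0 : ℝ) 1)
    (cost : Equiv.Perm (Fin n) → ℝ)
    (hcost : ∀ π : Equiv.Perm (Fin n), cost π = ∑ j, ((n : ℝ) - (π j : ℕ)) * μ j)
    (OPT : ℝ)
    (hOPT : OPT = Finset.univ.inf' Finset.univ_nonempty cost)
    (ε : ℝ) (hε : ε ∈ Set.Ioo (0 : ℝ) 1)
    (π : Equiv.Perm (Fin n)) (hπ : (1 + ε) * OPT < cost π) :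
    ∃ j j' : Fin n, j ≠ j' ∧
      cost (π * Equiv.swap j j') ≤ (1 - ε / (n : ℝ) ^ 2) * cost π := by
  obtain ⟨hε0, hε1⟩ := hε
  haveI : NeZero n := ⟨by omega⟩
  -- every cost is nonnegative
  have hcost_nonneg : ∀ τ : Equiv.Perm (Fin n), 0 ≤ cost τ := by
    intro τ
    rw [hcost]
    apply Finset.sum_nonneg
    intro j _
    have h1 : ((τ j : ℕ) : ℝ) < n := by
      exact_mod_cast (τ j).2
    have h2 := (hμ j).1
    nlinarith
  -- an optimal permutation
  obtain ⟨σ, -, hσ⟩ := Finset.exists_mem_eq_inf' (Finset.univ_nonempty) cost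
  have hσopt : cost σ = OPT := by rw [hOPT, hσ]
  have hOPT_le : ∀ τ, OPT ≤ cost τ := by
    intro τ
    rw [hOPT]
    exact Finset.inf'_le _ (Finset.mem_univ τ)
  have hOPT0 : 0 ≤ OPT := hσopt ▸ hcost_nonneg σ
  have hπpos : 0 < cost π := lt_of_le_of_lt (by nlinarith) hπ
  have hn0 : (0 : ℝ) < (n : ℝ) := by exact_mod_cast hn
  set t : ℝ := ε / (n : ℝ) ^ 2 * cost π with ht
  have htpos : 0 < t := by positivity
  by_contra hcon
  push_neg at hcon
  -- gain of every swap is < t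
  have hgain : ∀ j j' : Fin n, j ≠ j' →
      cost π - cost (π * Equiv.swap j j') < t := by
    intro j j' hjj'
    have := hcon j j' hjj'
    have : (1 - ε / (n : ℝ) ^ 2) * cost π < cost (π * Equiv.swap j j') := this
    nlinarith
  -- swap gain formula
  have hswap : ∀ j j' : Fin n, j ≠ j' →
      cost π - cost (π * Equiv.swap j j')
        = (((π j' : ℕ) : ℝ) - ((π j : ℕ) : ℝ)) * (μ j - μ j') := by
    intro j j' hjj'
    rw [hcost, hcost, ← Finset.sum_sub_distrib]
    have hterm : ∀ k : Fin n,
        ((n : ℝ) - ((π k : ℕ) : ℝ)) * μ k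
          - ((n : ℝ) - (((π * Equiv.swap j j') k : ℕ) : ℝ)) * μ k
        = ((((π (Equiv.swap j j' k) : ℕ)) : ℝ) - ((π k : ℕ) : ℝ)) * μ k := by
      intro k
      simp only [Equiv.Perm.mul_apply]
      ring
    rw [Finset.sum_congr rfl (fun k _ => hterm k)]
    rw [← Finset.sum_subset (Finset.subset_univ ({j, j'} : Finset (Fin n)))]
    · rw [Finset.sum_pair hjj']
      rw [Equiv.swap_apply_left, Equiv.swap_apply_right]
      ring
    · intro k _ hk
      simp only [Finset.mem_insert, Finset.mem_singleton, not_or] at hk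
      rw [Equiv.swap_apply_of_ne_of_ne hk.1 hk.2]
      ring
  -- pairwise decomposition
  set D : Fin n → Fin n → ℝ := fun j k =>
    ((if σ k < σ j then (1 : ℝ) else 0) - (if π k < π j then (1 : ℝ) else 0)) * μ j
    with hD
  have hdecomp : cost π - cost σ = ∑ j, ∑ k, D j k := by
    rw [hcost, hcost, ← Finset.sum_sub_distrib]
    apply Finset.sum_congr rfl
    intro j _
    have : ((n : ℝ) - ((π j : ℕ) : ℝ)) * μ j - ((n : ℝ) - ((σ j : ℕ) : ℝ)) * μ j
        = (((σ j : ℕ) : ℝ) - ((π j : ℕ) : ℝ)) * μ j := by ring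
    rw [this, perm_val_eq_card n σ j, perm_val_eq_card n π j,
      ← Finset.sum_sub_distrib, Finset.sum_mul]
  -- each symmetric pair term is < t
  have hpair : ∀ j k : Fin n, D j k + D k j < t := by
    intro j k
    by_cases hjk : j = k
    · subst hjk
      simp only [hD, lt_irrefl, if_neg (lt_irrefl _)]
      simpa using htpos
    · have hπne : π j ≠ π k := fun h => hjk (π.injective h)
      have hσne : σ j ≠ σ k := fun h => hjk (σ.injective h)
      have hμj := hμ j
      have hμk := hμ k
      rcases lt_or_gt_of_ne hπne with hπlt | hπlt <;>
        rcases lt_or_gt_of_ne hσne with hσlt | hσlt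
      · -- π j < π k, σ j < σ k
        simp only [hD, if_pos hπlt, if_pos hσlt,
          if_neg (asymm hπlt), if_neg (asymm hσlt)]
        simpa using htpos
      · -- π j < π k, σ k < σ j : possible gain from swapping j k
        simp only [hD, if_pos hπlt, if_pos hσlt,
          if_neg (asymm hπlt), if_neg (asymm hσlt)]
        have hgjk := hgain j k hjk
        rw [hswap j k hjk] at hgjk
        have hcast : ((π j : ℕ) : ℝ) + 1 ≤ ((π k : ℕ) : ℝ) := by
          have : (π j : ℕ) < (π k : ℕ) := hπlt
          exact_mod_cast this
        rcases le_or_gt (μ k) (μ j) with hμle | hμle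
        · nlinarith
        · nlinarith
      · -- π k < π j, σ j < σ k
        simp only [hD, if_pos hπlt, if_pos hσlt,
          if_neg (asymm hπlt), if_neg (asymm hσlt)]
        have hgkj := hgain k j (Ne.symm hjk)
        rw [hswap k j (Ne.symm hjk)] at hgkj
        have hcast : ((π k : ℕ) : ℝ) + 1 ≤ ((π j : ℕ) : ℝ) := by
          have : (π k : ℕ) < (π j : ℕ) := hπlt
          exact_mod_cast this
        rcases le_or_gt (μ j) (μ k) with hμle | hμle
        · nlinarith
        · nlinarith
      · -- π k < π j, σ k < σ j
        simp only [hD, if_pos hπlt, if_pos hσlt,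
          if_neg (asymm hπlt), if_neg (asymm hσlt)]
        simpa using htpos
  -- sum the pairwise bounds
  have hsum2 : 2 * (cost π - cost σ) = ∑ j, ∑ k, (D j k + D k j) := by
    have hcomm : ∑ j, ∑ k, D k j = ∑ j, ∑ k, D j k := Finset.sum_comm
    rw [hdecomp]
    simp only [Finset.sum_add_distrib]
    rw [hcomm]; ring
  have hbound : ∑ j, ∑ k, (D j k + D k j) < (n : ℝ) ^ 2 * t := by
    calc ∑ j : Fin n, ∑ k : Fin n, (D j k + D k j)
        < ∑ j : Fin n, ∑ k : Fin n, t := by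
          apply Finset.sum_lt_sum_of_nonempty Finset.univ_nonempty
          intro j _
          apply Finset.sum_lt_sum_of_nonempty Finset.univ_nonempty
          intro k _
          exact hpair j k
      _ = (n : ℝ) ^ 2 * t := by
          simp [Finset.sum_const, Finset.card_univ]
          ring
  -- contradiction
  have h1 : 2 * (cost π - cost σ) < (n : ℝ) ^ 2 * t := hsum2 ▸ hbound
  rw [ht] at h1
  have h2 : (n : ℝ) ^ 2 * (ε / (n : ℝ) ^ 2 * cost π) = ε * cost π := by
    field_simp
  rw [h2] at h1
  -- cost π - OPT > ε/(1+ε) cost π ≥ ε/2 cost π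
  rw [hσopt] at h1
  have h1ε : (0:ℝ) < 1 + ε := by linarith
  nlinarith [mul_lt_mul_of_pos_left h1 h1ε, hπ, mul_pos hε0 hπpos,
    mul_pos (mul_pos hε0 hπpos) (show (0:ℝ) < 1 - ε by linarith)]
end

section
/- Let B₁ and B₂ be bases of a matroid M on a finite ground set S. Then there exists a bijection f : B₁ \ B₂ → B₂ \ B₁ such that for every x ∈ B₁ \ B₂, the set (B₁ \ {x}) ∪ {f(x)} is a base of M. -/
/-!
By Hall's marriage theorem it suffices that every `A ⊆ B₁ \ B₂` has at least `|A|` exchange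
partners, i.e. elements `y ∈ B₂ \ B₁` such that `B₁ - x + y` is a base for some `x ∈ A`; let `N`
be the set of them. Closure commutes with intersections of subsets of an independent set, so an
element `y ∉ cl(B₁ \ A)` already lies outside `cl(B₁ - x)` for some `x ∈ A`, making `B₁ - x + y` a
base. Hence `(B₁ \ A) ∪ N` spans `B₂`, so contains a base, and `r ≤ (r - |A|) + |N|`. Since
`|B₁ \ B₂| = |B₂ \ B₁|`, the injection given by Hall's theorem is a bijection.
-/

open Set

namespace Matroid

variable {α : Type*} {M : Matroid α} {I X B A B₁ B₂ : Set α} {y : α}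

lemma Indep.exists_notMem_closure_sdiff_singleton (hI : M.Indep I) (hyI : y ∈ M.closure I)
    (hyX : y ∉ M.closure (I \ X)) : ∃ x ∈ X, y ∉ M.closure (I \ {x}) := by
  obtain rfl | hX := X.eq_empty_or_nonempty
  · simp_all
  have := hX.to_subtype
  have hcl : M.closure (I \ X) = ⋂ x : X, M.closure (I \ {(x : α)}) := by
    rw [← hI.closure_iInter_eq_biInter_closure_of_forall_subset fun _ ↦ sdiff_subset,
      ← sdiff_iUnion, iUnion_singleton_eq_range, Subtype.range_coe]
  simpa [hcl] using hyX

lemma IsBase.exists_isBase_insert_sdiff_singleton_of_notMem_closure (hB : M.IsBase B)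
    (hy : y ∈ M.E) (hyX : y ∉ M.closure (B \ X)) : ∃ x ∈ X, M.IsBase (insert y (B \ {x})) := by
  obtain ⟨x, hxX, hx⟩ := hB.indep.exists_notMem_closure_sdiff_singleton (hB.closure_eq ▸ hy) hyX
  have hxB : x ∈ B := by
    by_contra hxB
    rw [sdiff_singleton_eq_self hxB, hB.closure_eq] at hx
    exact hx hy
  exact ⟨x, hxX, hB.exchange_base_of_notMem_closure hxB hx⟩

lemma IsBase.subset_closure_sdiff_union_setOf_isBase_insert (hB₁ : M.IsBase B₁)
    (hB₂ : M.IsBase B₂) (hA : A ⊆ B₁ \ B₂) :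
    B₂ ⊆ M.closure ((B₁ \ A) ∪ {y ∈ B₂ \ B₁ | ∃ x ∈ A, M.IsBase (insert y (B₁ \ {x}))}) := by
  intro y hy
  have hyE : y ∈ M.E := hB₂.subset_ground hy
  by_cases hyA : y ∈ M.closure (B₁ \ A)
  · exact M.closure_subset_closure subset_union_left hyA
  have hyB₁ : y ∉ B₁ := fun h ↦ hyA (M.mem_closure_of_mem' ⟨h, fun h' ↦ (hA h').2 hy⟩)
  obtain ⟨x, hxA, hx⟩ := hB₁.exists_isBase_insert_sdiff_singleton_of_notMem_closure hyE hyA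
  exact M.mem_closure_of_mem' (Or.inr ⟨⟨hy, hyB₁⟩, x, hxA, hx⟩)

lemma IsBase.encard_le_encard_setOf_isBase_insert [M.RankFinite] (hB₁ : M.IsBase B₁)
    (hB₂ : M.IsBase B₂) (hA : A ⊆ B₁ \ B₂) :
    A.encard ≤ {y ∈ B₂ \ B₁ | ∃ x ∈ A, M.IsBase (insert y (B₁ \ {x}))}.encard := by
  set N := {y ∈ B₂ \ B₁ | ∃ x ∈ A, M.IsBase (insert y (B₁ \ {x}))}
  have hground : (B₁ \ A) ∪ N ⊆ M.E :=
    union_subset (sdiff_subset.trans hB₁.subset_ground)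
      ((sep_subset _ _).trans (sdiff_subset.trans hB₂.subset_ground))
  have hspan : M.Spanning ((B₁ \ A) ∪ N) := by
    rw [spanning_iff_ground_subset_closure hground, ← hB₂.closure_eq]
    exact M.closure_subset_closure_of_subset_closure
      (hB₁.subset_closure_sdiff_union_setOf_isBase_insert hB₂ hA)
  obtain ⟨B, hB, hBsub⟩ := hspan.exists_isBase_subset
  refine (WithTop.add_le_add_iff_left (hB₁.finite.sdiff (t := A)).encard_lt_top.ne).1 ?_
  calc (B₁ \ A).encard + A.encard = B₁.encard :=
        encard_sdiff_add_encard_of_subset (hA.trans sdiff_subset)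
    _ = B.encard := hB₁.encard_eq_encard_of_isBase hB
    _ ≤ ((B₁ \ A) ∪ N).encard := encard_le_encard hBsub
    _ ≤ (B₁ \ A).encard + N.encard := encard_union_le _ _

open Classical in
lemma IsBase.card_le_card_filter_isBase_insert [M.RankFinite] (hB₁ : M.IsBase B₁)
    (hB₂ : M.IsBase B₂) [Fintype ↥(B₂ \ B₁)] (s : Finset ↥(B₁ \ B₂)) :
    s.card ≤ (Finset.univ.filter fun y : ↥(B₂ \ B₁) ↦
      ∃ x ∈ s, M.IsBase (insert (y : α) (B₁ \ {(x : α)}))).card := by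
  have hN : {y ∈ B₂ \ B₁ | ∃ x ∈ Subtype.val '' (s : Set ↥(B₁ \ B₂)),
      M.IsBase (insert y (B₁ \ {x}))} =
      Subtype.val '' ((Finset.univ.filter fun y : ↥(B₂ \ B₁) ↦
        ∃ x ∈ s, M.IsBase (insert (y : α) (B₁ \ {(x : α)}))) : Set ↥(B₂ \ B₁)) := by
    ext y
    simp [and_comm]
  have hall := hB₁.encard_le_encard_setOf_isBase_insert hB₂ (Subtype.coe_image_subset _ s)
  rw [hN] at hall
  simpa only [Subtype.val_injective.encard_image, encard_coe_eq_coe_finsetCard,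
    Nat.cast_le] using hall

end Matroid

/-- Matroid base exchange bijection: for bases `B₁`, `B₂` of a matroid `M` on a finite
ground set, there is a bijection `f : B₁ \ B₂ → B₂ \ B₁` such that for every
`x ∈ B₁ \ B₂` the set `(B₁ \ {x}) ∪ {f(x)}` is a base of `M`. -/
theorem matroid_base_exchange_bijection
    {α : Type*} (M : Matroid α) [M.Finite]
    (B₁ B₂ : Set α) (h₁ : M.IsBase B₁) (h₂ : M.IsBase B₂) :
    ∃ f : (B₁ \ B₂ : Set α) → (B₂ \ B₁ : Set α), Function.Bijective f ∧
      ∀ x : (B₁ \ B₂ : Set α), M.IsBase (insert (f x : α) (B₁ \ {(x : α)})) := by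
  classical
  have := (h₂.finite.sdiff (t := B₁)).fintype
  obtain ⟨f, hf_inj, hf⟩ := (Fintype.all_card_le_filter_rel_iff_exists_injective
    fun (x : ↥(B₁ \ B₂)) (y : ↥(B₂ \ B₁)) ↦ M.IsBase (insert (y : α) (B₁ \ {(x : α)}))).1
    (h₁.card_le_card_filter_isBase_insert h₂)
  have hcard : Nat.card ↥(B₁ \ B₂) = Nat.card ↥(B₂ \ B₁) := by
    simpa [Nat.card_coe_set_eq] using h₁.ncard_sdiff_comm h₂
  exact ⟨f, hf_inj.bijective_of_nat_card_le hcard.ge, hf⟩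
end

section
/- Let M be a matroid on a finite ground set S with rank r ≥ 1, let μ : S → ℝ be nonnegative weights, and let B* be a base of M of minimum cost. Let ε ∈ (0,1) and let B be a base of M with cost(B) > (1+ε)·cost(B*). Then there exist s ∈ B and y ∈ S \ B such that B' = (B \ {s}) ∪ {y} is a base of M with cost(B') ≤ (1 − ε/(2r))·cost(B). -/
/-!
Symmetric exchange: for bases `B`, `B'` and `f ∈ B' \ B`, the fundamental circuit of `f` in `B`
meets the fundamental cocircuit of `f` for `B'` in a second element `e`, since a circuit and a
cocircuit never meet in a single element; then both `B - e + f` and `B' - f + e` are bases.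
Passing from `B'` to `B' - f + e` shrinks `B \ B'` by one element, so induction yields a single
exchange `B - s + y` whose saving `μ s - μ y` is at least the average
`(cost B - cost B') / |B \ B'|`. For `B' = B*` this average is at least `(cost B - cost B*) / r`,
and `cost B > (1 + ε) cost B*` with `ε < 1` gives `cost B - cost B* ≥ ε / 2 · cost B`.
-/

open Set

theorem finsum_mem_insert_sdiff_singleton {α M : Type*} [AddCommGroup M] (f : α → M)
    {S : Set α} {s y : α} (hS : S.Finite) (hs : s ∈ S) (hy : y ∉ S) :
    ∑ᶠ x ∈ insert y (S \ {s}), f x = ∑ᶠ x ∈ S, f x - f s + f y := by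
  rw [finsum_mem_insert f (fun h ↦ hy h.1) hS.sdiff,
    ← finsum_mem_add_sdiff (singleton_subset_iff.2 hs) hS, finsum_mem_singleton]
  abel

namespace Matroid

variable {α : Type*} {M : Matroid α} {B B' : Set α}

theorem IsBase.exists_symm_exchange (hB : M.IsBase B) (hB' : M.IsBase B') {f : α}
    (hf : f ∈ B' \ B) :
    ∃ e ∈ B \ B', M.IsBase (insert f (B \ {e})) ∧ M.IsBase (insert e (B' \ {f})) := by
  have hfE : f ∈ M.E := hB'.subset_ground hf.1
  have hC := hB.fundCircuit_isCircuit hfE hf.2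
  have hK := M.fundCocircuit_isCocircuit hf.1 hB'
  obtain ⟨e, ⟨heC, heK⟩, hef⟩ : ∃ e ∈ M.fundCircuit f B ∩ M.fundCocircuit f B', e ≠ f := by
    by_contra! h
    exact hC.inter_isCocircuit_ne_singleton hK <| eq_singleton_iff_unique_mem.2
      ⟨⟨M.mem_fundCircuit f B, M.mem_fundCocircuit f B'⟩, h⟩
  have heB : e ∈ B := (M.fundCircuit_subset_insert f B heC).resolve_left hef
  have heB' : e ∉ B' := ((M.fundCocircuit_subset_insert_compl f B' heK).resolve_left hef).2
  have hfcl : f ∈ M.closure B := by rw [hB.closure_eq]; exact hfE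
  have hecl : e ∈ M.closure B' := by rw [hB'.closure_eq]; exact hB.subset_ground heB
  rw [hB.indep.mem_fundCircuit_iff hfcl hf.2, ← insert_sdiff_singleton_comm hef.symm] at heC
  rw [hB'.mem_fundCocircuit_iff_mem_fundCircuit, hB'.indep.mem_fundCircuit_iff hecl heB',
    ← insert_sdiff_singleton_comm hef] at heK
  exact ⟨e, ⟨heB, heB'⟩, hB.exchange_isBase_of_indep hf.2 heC,
    hB'.exchange_isBase_of_indep heB' heK⟩

theorem IsBase.exists_exchange_sub_le_ncard_mul [M.RankFinite] (μ : α → ℝ)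
    (hB : M.IsBase B) (hB' : M.IsBase B') (hne : B ≠ B') :
    ∃ s ∈ B \ B', ∃ y ∈ B' \ B, M.IsBase (insert y (B \ {s})) ∧
      ∑ᶠ x ∈ B, μ x - ∑ᶠ x ∈ B', μ x ≤ (B \ B').ncard * (μ s - μ y) := by
  induction hn : (B \ B').ncard using Nat.strong_induction_on generalizing B' with
  | _ n ih =>
    obtain ⟨f, hf⟩ : (B' \ B).Nonempty :=
      nonempty_of_not_subset fun h ↦ hne (hB'.eq_of_subset_isBase hB h).symm
    obtain ⟨e, he, hBe, hB'f⟩ := hB.exists_symm_exchange hB' hf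
    have hcost : ∑ᶠ x ∈ insert e (B' \ {f}), μ x = ∑ᶠ x ∈ B', μ x - μ f + μ e :=
      finsum_mem_insert_sdiff_singleton μ hB'.finite hf.1 he.2
    have hsdiff : B \ insert e (B' \ {f}) = (B \ B') \ {e} := by
      ext x; by_cases x = f <;> aesop
    have hcard : (B \ insert e (B' \ {f})).ncard = n - 1 := by
      rw [hsdiff, ncard_sdiff_singleton_of_mem he, hn]
    have hpos : 0 < n := hn ▸ (ncard_pos hB.finite.sdiff).2 ⟨e, he⟩
    by_cases hB_eq : B = insert e (B' \ {f})
    · have hn1 : n = 1 := by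
        rw [← hB_eq, sdiff_self, ncard_empty] at hcard
        omega
      refine ⟨e, he, f, hf, hBe, ?_⟩
      rw [hn1, Nat.cast_one, one_mul, hB_eq, hcost]
      linarith
    obtain ⟨s, hs, y, hy, hBsy, hgain⟩ := ih (n - 1) (by omega) hB'f hB_eq hcard
    rw [hcost, Nat.cast_pred hpos] at hgain
    have hs' : s ∈ B \ B' := (hsdiff ▸ hs).1
    have hy' : y ∈ B' \ B := by
      obtain ⟨rfl | hy, hyB⟩ := hy
      · exact absurd he.1 hyB
      · exact ⟨hy.1, hyB⟩
    have hn_pred : (0 : ℝ) ≤ n - 1 := by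
      rw [sub_nonneg, Nat.one_le_cast]; exact hpos
    -- the cost gap is `hgain`'s gap plus `μ e - μ f`; keep whichever exchange saves more
    rcases le_total (μ e - μ f) (μ s - μ y) with h | h
    · exact ⟨s, hs', y, hy', hBsy, by linarith⟩
    · exact ⟨e, he, f, hf, hBe, by nlinarith [mul_le_mul_of_nonneg_left h hn_pred]⟩

end Matroid

theorem matroid_base_improving_swap_general
    {α : Type*} (M : Matroid α) [M.Finite]
    (r : ℕ) (hrank : ∀ B, M.IsBase B → B.ncard = r)
    (μ : α → ℝ) (hμ : ∀ s, 0 ≤ μ s)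
    (Bstar : Set α) (hBstar : M.IsBase Bstar)
    (ε : ℝ) (hε : ε ∈ Set.Ioo (0 : ℝ) 1)
    (B : Set α) (hB : M.IsBase B)
    (hcost : (1 + ε) * ∑ᶠ s ∈ Bstar, μ s < ∑ᶠ s ∈ B, μ s) :
    ∃ s ∈ B, ∃ y ∈ M.E \ B, M.IsBase (insert y (B \ {s})) ∧
      ∑ᶠ x ∈ insert y (B \ {s}), μ x ≤ (1 - ε / (2 * r)) * ∑ᶠ s ∈ B, μ s := by
  obtain ⟨hε0, hε1⟩ := hε
  have hBstar_nonneg : 0 ≤ ∑ᶠ s ∈ Bstar, μ s := finsum_nonneg fun s ↦ finsum_nonneg fun _ ↦ hμ s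
  have hne : B ≠ Bstar := by rintro rfl; nlinarith
  obtain ⟨s, hs, y, hy, hBsy, hgain⟩ := hB.exists_exchange_sub_le_ncard_mul μ hBstar hne
  refine ⟨s, hs.1, y, ⟨hBstar.subset_ground hy.1, hy.2⟩, hBsy, ?_⟩
  rw [finsum_mem_insert_sdiff_singleton μ hB.finite hs.1 hy.2]
  have hnr : ((B \ Bstar).ncard : ℝ) ≤ r := by
    rw [← hrank B hB]; exact_mod_cast ncard_le_ncard sdiff_subset hB.finite
  set cB := ∑ᶠ x ∈ B, μ x
  set cS := ∑ᶠ x ∈ Bstar, μ x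
  have hgap : 0 < cB - cS := by linarith [mul_nonneg hε0.le hBstar_nonneg]
  have hswap : 0 < μ s - μ y := pos_of_mul_pos_right (hgap.trans_le hgain) (Nat.cast_nonneg _)
  have hkey : ε * cB ≤ (μ s - μ y) * (2 * r) := calc
    ε * cB ≤ 2 * (cB - cS) := by
      nlinarith [mul_nonneg (sub_nonneg.2 hε1.le) (mul_nonneg hε0.le hBstar_nonneg)]
    _ ≤ 2 * ((B \ Bstar).ncard * (μ s - μ y)) := by gcongr
    _ ≤ 2 * (r * (μ s - μ y)) := by gcongr
    _ = (μ s - μ y) * (2 * r) := by ring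
  have hratio := div_le_of_le_mul₀ (by positivity) hswap.le hkey
  rw [sub_mul, one_mul, div_mul_eq_mul_div]
  linarith

/-- Circuit-swap improving move for minimum cost matroid bases: if a base `B` has cost
greater than `(1+ε)` times the minimum base cost, then some single exchange
`B' = (B \ {s}) ∪ {y}` (with `s ∈ B`, `y ∈ S \ B`) is a base with
`cost(B') ≤ (1 − ε/(2r))·cost(B)`, where `r ≥ 1` is the rank of the matroid. -/
theorem matroid_base_improving_swap
    {α : Type*} (M : Matroid α) [M.Finite]
    (r : ℕ) (hr : 1 ≤ r) (hrank : ∀ B, M.IsBase B → B.ncard = r)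
    (μ : α → ℝ) (hμ : ∀ s, 0 ≤ μ s)
    (Bstar : Set α) (hBstar : M.IsBase Bstar)
    (hmin : ∀ B, M.IsBase B → ∑ᶠ s ∈ Bstar, μ s ≤ ∑ᶠ s ∈ B, μ s)
    (ε : ℝ) (hε : ε ∈ Set.Ioo (0 : ℝ) 1)
    (B : Set α) (hB : M.IsBase B)
    (hcost : (1 + ε) * ∑ᶠ s ∈ Bstar, μ s < ∑ᶠ s ∈ B, μ s) :
    ∃ s ∈ B, ∃ y ∈ M.E \ B, M.IsBase (insert y (B \ {s})) ∧
      ∑ᶠ x ∈ insert y (B \ {s}), μ x ≤ (1 - ε / (2 * r)) * ∑ᶠ s ∈ B, μ s :=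
  matroid_base_improving_swap_general M r hrank μ hμ Bstar hBstar ε hε B hB hcost
end

section
/- Let ε > 0 with n·ε < 1, let 1 ≤ k ≤ m, and let C ⊆ X with |C| = k be a set of centers such that every swap C' of C satisfies cost(C') > (1 − ε)·cost(C). Then cost(C) ≤ (5/(1 − n·ε))·OPT_k. -/
private lemma exists_inj_fun {α : Type*} [DecidableEq α] (s t : Finset α) (h : s.card ≤ t.card) :
    ∃ f : α → α, (∀ x ∈ s, f x ∈ t) ∧ Set.InjOn f s := by
  classical
  induction s using Finset.induction generalizing t with
  | empty => exact ⟨id, by simp, by simp [Set.InjOn]⟩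
  | @insert a s ha ih =>
    have hcard : s.card + 1 ≤ t.card := by
      rwa [Finset.card_insert_of_notMem ha] at h
    have htne : t.Nonempty := Finset.card_pos.mp (by omega)
    obtain ⟨b, hb⟩ := htne
    have hcard' : s.card ≤ (t.erase b).card := by
      rw [Finset.card_erase_of_mem hb]; omega
    obtain ⟨f, hft, hfinj⟩ := ih (t.erase b) hcard'
    refine ⟨Function.update f a b, ?_, ?_⟩
    · intro x hx
      rcases Finset.mem_insert.mp hx with rfl | hxs
      · simp [Function.update_self, hb]
      · have hxa : x ≠ a := fun hxa => ha (hxa ▸ hxs)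
        rw [Function.update_of_ne hxa]
        exact Finset.mem_of_mem_erase (hft x hxs)
    · intro x hx y hy hxy
      simp only [Finset.coe_insert, Set.mem_insert_iff, Finset.mem_coe] at hx hy
      rcases hx with rfl | hxs <;> rcases hy with rfl | hys
      · rfl
      · exfalso
        have hya : y ≠ x := by rintro rfl; exact ha hys
        rw [Function.update_self, Function.update_of_ne hya] at hxy
        have h2 := hft y hys; rw [← hxy] at h2; exact Finset.notMem_erase b t h2
      · exfalso
        have hxa : x ≠ y := by rintro rfl; exact ha hxs
        rw [Function.update_self, Function.update_of_ne hxa] at hxy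
        have h2 := hft x hxs; rw [hxy] at h2; exact Finset.notMem_erase b t h2
      · have hxa : x ≠ a := by rintro rfl; exact ha hxs
        have hya : y ≠ a := by rintro rfl; exact ha hys
        rw [Function.update_of_ne hxa, Function.update_of_ne hya] at hxy
        exact hfinj hxs hys hxy

private lemma exists_two_to_one {α : Type*} [DecidableEq α] (s t : Finset α)
    (h : s.card ≤ 2 * t.card) :
    ∃ f : α → α, (∀ x ∈ s, f x ∈ t) ∧ ∀ a : α, (s.filter fun x => f x = a).card ≤ 2 := by
  classical
  obtain ⟨s₁, hsub, hcard⟩ := Finset.exists_subset_card_eq (min_le_left s.card t.card)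
  have h1 : s₁.card ≤ t.card := by rw [hcard]; exact min_le_right _ _
  have h2 : (s \ s₁).card ≤ t.card := by
    rw [Finset.card_sdiff_of_subset hsub, hcard]
    rcases le_total s.card t.card with hst | hst
    · rw [min_eq_left hst]; omega
    · rw [min_eq_right hst]; omega
  obtain ⟨f₁, hf₁t, hf₁inj⟩ := exists_inj_fun s₁ t h1
  obtain ⟨f₂, hf₂t, hf₂inj⟩ := exists_inj_fun (s \ s₁) t h2
  refine ⟨fun x => if x ∈ s₁ then f₁ x else f₂ x, ?_, ?_⟩
  · intro x hx
    by_cases hx1 : x ∈ s₁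
    · simpa [hx1] using hf₁t x hx1
    · simpa [hx1] using hf₂t x (Finset.mem_sdiff.mpr ⟨hx, hx1⟩)
  · intro a
    have hsubf : (s.filter fun x => (if x ∈ s₁ then f₁ x else f₂ x) = a)
        ⊆ (s₁.filter fun x => f₁ x = a) ∪ ((s \ s₁).filter fun x => f₂ x = a) := by
      intro x hx
      rw [Finset.mem_filter] at hx
      by_cases hx1 : x ∈ s₁
      · exact Finset.mem_union_left _ (Finset.mem_filter.mpr ⟨hx1, by simpa [hx1] using hx.2⟩)
      · exact Finset.mem_union_right _ (Finset.mem_filter.mpr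
          ⟨Finset.mem_sdiff.mpr ⟨hx.1, hx1⟩, by simpa [hx1] using hx.2⟩)
    have c1 : (s₁.filter fun x => f₁ x = a).card ≤ 1 := by
      rw [Finset.card_le_one]
      intro x hx y hy
      rw [Finset.mem_filter] at hx hy
      exact hf₁inj (Finset.mem_coe.mpr hx.1) (Finset.mem_coe.mpr hy.1) (hx.2.trans hy.2.symm)
    have c2 : ((s \ s₁).filter fun x => f₂ x = a).card ≤ 1 := by
      rw [Finset.card_le_one]
      intro x hx y hy
      rw [Finset.mem_filter] at hx hy
      exact hf₂inj (Finset.mem_coe.mpr hx.1) (Finset.mem_coe.mpr hy.1) (hx.2.trans hy.2.symm)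
    calc (s.filter fun x => (if x ∈ s₁ then f₁ x else f₂ x) = a).card
        ≤ ((s₁.filter fun x => f₁ x = a) ∪ ((s \ s₁).filter fun x => f₂ x = a)).card :=
          Finset.card_le_card hsubf
      _ ≤ _ := Finset.card_union_le _ _
      _ ≤ 2 := by omega

private lemma fiber_count {α : Type*} [DecidableEq α] (Cs C : Finset α) (eta : α → α)
    (hetaC : ∀ o ∈ Cs, eta o ∈ C) (hkk : Cs.card = C.card) :
    (Cs.filter fun o => ¬ ∀ o' ∈ Cs, eta o' = eta o → o' = o).card
      ≤ 2 * (C \ Cs.image eta).card := by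
  classical
  set Img := Cs.image eta with hImg
  set T := Cs.filter (fun o => ¬ ∀ o' ∈ Cs, eta o' = eta o → o' = o) with hT
  set P : α → Prop := fun a => 2 ≤ (Cs.filter fun o => eta o = a).card with hP
  set Img2 := Img.filter P with hImg2
  have e0 : Img ⊆ C := by
    intro a ha
    obtain ⟨o, ho, rfl⟩ := Finset.mem_image.mp ha
    exact hetaC o ho
  have f1 : Cs.card = ∑ a ∈ Img, (Cs.filter fun o => eta o = a).card :=
    Finset.card_eq_sum_card_fiberwise (fun o ho => Finset.mem_image_of_mem _ ho)
  have hTImg2 : ∀ o ∈ T, eta o ∈ Img2 := by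
    intro o ho
    rw [hT, Finset.mem_filter] at ho
    obtain ⟨hoCs, hno⟩ := ho
    push_neg at hno
    obtain ⟨o', ho'Cs, heq, hne⟩ := hno
    refine Finset.mem_filter.mpr ⟨Finset.mem_image_of_mem _ hoCs, ?_⟩
    have : 1 < (Cs.filter fun x => eta x = eta o).card := by
      apply Finset.one_lt_card.mpr
      exact ⟨o, Finset.mem_filter.mpr ⟨hoCs, rfl⟩, o',
        Finset.mem_filter.mpr ⟨ho'Cs, heq⟩, fun hc => hne hc.symm⟩
    omega
  have f2 : T.card = ∑ a ∈ Img2, (Cs.filter fun o => eta o = a).card := by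
    rw [Finset.card_eq_sum_card_fiberwise hTImg2]
    apply Finset.sum_congr rfl
    intro a ha
    congr 1
    ext o
    simp only [hT, Finset.mem_filter]
    constructor
    · rintro ⟨⟨hoCs, _⟩, hoa⟩; exact ⟨hoCs, hoa⟩
    · rintro ⟨hoCs, hoa⟩
      refine ⟨⟨hoCs, ?_⟩, hoa⟩
      have hcard2 : 1 < (Cs.filter fun x => eta x = a).card := by
        have := (Finset.mem_filter.mp ha).2
        rw [hP] at this; omega
      obtain ⟨o', ho', hne⟩ := Finset.exists_mem_ne hcard2 o
      rw [Finset.mem_filter] at ho'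
      intro hall
      exact hne (hall o' ho'.1 (by rw [ho'.2, hoa]))
  have f3 : 2 * Img2.card ≤ T.card := by
    rw [f2]
    calc 2 * Img2.card = ∑ _a ∈ Img2, 2 := by rw [Finset.sum_const, smul_eq_mul]; ring
      _ ≤ _ := Finset.sum_le_sum (fun a ha => (Finset.mem_filter.mp ha).2)
  have f4 : Cs.card + Img2.card = T.card + Img.card := by
    have hsplit : ∑ a ∈ Img.filter P, (Cs.filter fun o => eta o = a).card
        + ∑ a ∈ Img.filter (fun a => ¬ P a), (Cs.filter fun o => eta o = a).card
        = ∑ a ∈ Img, (Cs.filter fun o => eta o = a).card :=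
      Finset.sum_filter_add_sum_filter_not Img P _
    have hone : ∑ a ∈ Img.filter (fun a => ¬ P a), (Cs.filter fun o => eta o = a).card
        = (Img.filter (fun a => ¬ P a)).card := by
      rw [Finset.card_eq_sum_ones]
      apply Finset.sum_congr rfl
      intro a ha
      rw [Finset.mem_filter] at ha
      have h1 : 1 ≤ (Cs.filter fun o => eta o = a).card := by
        obtain ⟨o, ho, rfl⟩ := Finset.mem_image.mp ha.1
        exact Finset.card_pos.mpr ⟨o, Finset.mem_filter.mpr ⟨ho, rfl⟩⟩
      have h2 : ¬ 2 ≤ (Cs.filter fun o => eta o = a).card := ha.2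
      omega
    have hcards : Img2.card + (Img.filter (fun a => ¬ P a)).card = Img.card := by
      rw [hImg2]
      exact Finset.card_filter_add_card_filter_not (p := P)
    rw [f1, ← hsplit, hone, ← hImg2, ← f2]
    omega
  have f5 : (C \ Img).card = C.card - Img.card := Finset.card_sdiff_of_subset e0
  have f6 : Img.card ≤ C.card := Finset.card_le_card e0
  omega

/-- Local search guarantee for uncertain `k`-median clustering (Arya et al. /
Cormode–McGregor): if every single swap of the center set `C` improves the cost by
less than a `(1−ε)` factor, then `cost(C) ≤ (5/(1 − n·ε))·OPT_k`. -/
theorem kmedian_local_search_approx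
    {Y : Type*} [MetricSpace Y] [DecidableEq Y]
    (X : Finset Y) (m : ℕ) (hm : X.card = m)
    (n : ℕ) (hn : 1 ≤ n) (p : Fin n → Y) (w : Fin n → ℝ) (hw : ∀ i, 0 ≤ w i)
    (cost : Finset Y → ℝ)
    (hcost : ∀ C : Finset Y,
      cost C = ∑ i, w i * sInf ((fun c => dist (p i) c) '' (C : Set Y)))
    (k : ℕ) (hk1 : 1 ≤ k) (hkm : k ≤ m)
    (OPT : ℝ)
    (hOPT : IsLeast {v : ℝ | ∃ C' : Finset Y, C' ⊆ X ∧ C'.card = k ∧ cost C' = v} OPT)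
    (ε : ℝ) (hε : 0 < ε) (hnε : (n : ℝ) * ε < 1)
    (C : Finset Y) (hC : C ⊆ X) (hCk : C.card = k)
    (hlocal : ∀ a ∈ C, ∀ b ∈ X \ C, (1 - ε) * cost C < cost (insert b (C.erase a))) :
    cost C ≤ (5 / (1 - (n : ℝ) * ε)) * OPT := by
  classical
  obtain ⟨hOPTmem, hOPTlb⟩ := hOPT
  obtain ⟨Cs, hCsX, hCsk, hCscost⟩ := hOPTmem
  have hCne : C.Nonempty := Finset.card_pos.mp (by omega)
  have hCsne : Cs.Nonempty := Finset.card_pos.mp (by omega)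
  have hbdd : ∀ (D : Finset Y) (i : Fin n), BddBelow ((fun c => dist (p i) c) '' (D : Set Y)) :=
    fun D i => (D.finite_toSet.image _).bddBelow
  have hub : ∀ (D : Finset Y) (q : Fin n → Y), (∀ i, q i ∈ D) →
      cost D ≤ ∑ i, w i * dist (p i) (q i) := by
    intro D q hq
    rw [hcost]
    apply Finset.sum_le_sum
    intro i _
    exact mul_le_mul_of_nonneg_left (csInf_le (hbdd D i) ⟨q i, hq i, rfl⟩) (hw i)
  have hsel : ∀ (D : Finset Y), D.Nonempty → ∀ i : Fin n, ∃ c, c ∈ D ∧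
      (∀ x ∈ D, dist (p i) c ≤ dist (p i) x) ∧
      sInf ((fun c => dist (p i) c) '' (D : Set Y)) = dist (p i) c := by
    intro D hD i
    obtain ⟨c, hc, hmin⟩ := D.exists_min_image (fun x => dist (p i) x) hD
    have hne : ((fun c => dist (p i) c) '' (D : Set Y)).Nonempty := ⟨dist (p i) c, ⟨c, hc, rfl⟩⟩
    refine ⟨c, hc, hmin, le_antisymm (csInf_le (hbdd D i) ⟨c, hc, rfl⟩) (le_csInf hne ?_)⟩
    rintro b ⟨x, hx, rfl⟩
    exact hmin x hx
  choose cC hcCmem hcCmin hcCinf using hsel C hCne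
  choose oS hoSmem hoSmin hoSinf using hsel Cs hCsne
  obtain ⟨dC, hdC⟩ : ∃ f : Fin n → ℝ, ∀ i, f i = dist (p i) (cC i) := ⟨_, fun _ => rfl⟩
  obtain ⟨dS, hdS⟩ : ∃ f : Fin n → ℝ, ∀ i, f i = dist (p i) (oS i) := ⟨_, fun _ => rfl⟩
  have hcostC : cost C = ∑ i, w i * dC i := by
    rw [hcost]
    exact Finset.sum_congr rfl fun i _ => by rw [hcCinf i, hdC i]
  have hcostS : OPT = ∑ i, w i * dS i := by
    rw [← hCscost, hcost]
    exact Finset.sum_congr rfl fun i _ => by rw [hoSinf i, hdS i]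
  have hdCnn : ∀ i, 0 ≤ dC i := fun i => by rw [hdC i]; exact dist_nonneg
  have hdSnn : ∀ i, 0 ≤ dS i := fun i => by rw [hdS i]; exact dist_nonneg
  have hcostCnn : 0 ≤ cost C := by
    rw [hcostC]; exact Finset.sum_nonneg fun i _ => mul_nonneg (hw i) (hdCnn i)
  have hOPTnn : 0 ≤ OPT := by
    rw [hcostS]; exact Finset.sum_nonneg fun i _ => mul_nonneg (hw i) (hdSnn i)
  have h1pos : 0 < 1 - (n : ℝ) * ε := by linarith
  -- nearest center in C to each point of Y
  have hetaex : ∀ o : Y, ∃ a, a ∈ C ∧ ∀ x ∈ C, dist o a ≤ dist o x := by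
    intro o
    obtain ⟨a, ha, hmin⟩ := C.exists_min_image (fun x => dist o x) hCne
    exact ⟨a, ha, hmin⟩
  choose eta hetaC hetaMin using hetaex
  -- the optimal centers that need swaps
  set O' : Finset Y := (Cs \ C).filter (fun o => ∃ i, oS i = o) with hO'def
  have hO'mem : ∀ o, o ∈ O' ↔ (o ∈ Cs ∧ o ∉ C ∧ ∃ i, oS i = o) := by
    intro o
    rw [hO'def, Finset.mem_filter, Finset.mem_sdiff, and_assoc]
  have hO'Cs : ∀ o ∈ O', o ∈ Cs := fun o ho => ((hO'mem o).mp ho).1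
  have hO'n : O'.card ≤ n := by
    have hsubim : O' ⊆ Finset.univ.image oS := by
      intro o ho
      obtain ⟨i, hi⟩ := ((hO'mem o).mp ho).2.2
      exact Finset.mem_image.mpr ⟨i, Finset.mem_univ i, hi⟩
    calc O'.card ≤ (Finset.univ.image oS).card := Finset.card_le_card hsubim
      _ ≤ n := by simpa using Finset.card_image_le (s := Finset.univ) (f := oS)
  set Img : Finset Y := Cs.image eta with hImgdef
  set S : Finset Y := O'.filter (fun o => ∀ o' ∈ Cs, eta o' = eta o → o' = o) with hSdef
  have hSmem : ∀ o, o ∈ S ↔ (o ∈ O' ∧ ∀ o' ∈ Cs, eta o' = eta o → o' = o) := by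
    intro o; rw [hSdef, Finset.mem_filter]
  have hcount : (O' \ S).card ≤ 2 * (C \ Img).card := by
    have hsub : O' \ S ⊆ Cs.filter fun o => ¬ ∀ o' ∈ Cs, eta o' = eta o → o' = o := by
      intro o ho
      rw [Finset.mem_sdiff] at ho
      refine Finset.mem_filter.mpr ⟨hO'Cs o ho.1, ?_⟩
      intro hall
      exact ho.2 ((hSmem o).mpr ⟨ho.1, hall⟩)
    calc (O' \ S).card ≤ _ := Finset.card_le_card hsub
      _ ≤ 2 * (C \ Img).card := fiber_count Cs C eta (fun o _ => hetaC o) (by rw [hCsk, hCk])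
  obtain ⟨g, hgt, hgmult⟩ := exists_two_to_one (O' \ S) (C \ Img) hcount
  obtain ⟨pr, hpr⟩ : ∃ f : Y → Y, ∀ o, f o = if o ∈ S then eta o else g o := ⟨_, fun _ => rfl⟩
  have hprC : ∀ o ∈ O', pr o ∈ C := by
    intro o ho
    rw [hpr o]
    by_cases hS : o ∈ S
    · rw [if_pos hS]; exact hetaC o
    · rw [if_neg hS]
      exact (Finset.mem_sdiff.mp (hgt o (Finset.mem_sdiff.mpr ⟨ho, hS⟩))).1
  have hprB : ∀ o ∈ O', ∀ o' ∈ Cs, eta o' = pr o → o' = o := by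
    intro o ho o' ho' heq
    rw [hpr o] at heq
    by_cases hS : o ∈ S
    · rw [if_pos hS] at heq
      exact ((hSmem o).mp hS).2 o' ho' heq
    · rw [if_neg hS] at heq
      exfalso
      have hgo := Finset.mem_sdiff.mp (hgt o (Finset.mem_sdiff.mpr ⟨ho, hS⟩))
      exact hgo.2 (heq ▸ Finset.mem_image_of_mem eta ho')
  have hprmult : ∀ a : Y, (O'.filter fun o => a = pr o).card ≤ 2 := by
    intro a
    by_cases haImg : a ∈ Img
    · have hsubf : (O'.filter fun o => a = pr o) ⊆ S.filter fun o => eta o = a := by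
        intro o ho
        rw [Finset.mem_filter] at ho
        by_cases hS : o ∈ S
        · refine Finset.mem_filter.mpr ⟨hS, ?_⟩
          have h2 := ho.2
          rw [hpr o, if_pos hS] at h2
          exact h2.symm
        · exfalso
          have hgo := Finset.mem_sdiff.mp (hgt o (Finset.mem_sdiff.mpr ⟨ho.1, hS⟩))
          apply hgo.2
          have h2 := ho.2
          rw [hpr o, if_neg hS] at h2
          rw [← h2]
          exact haImg
      have c1 : (S.filter fun o => eta o = a).card ≤ 1 := by
        rw [Finset.card_le_one]
        intro x hx y hy
        rw [Finset.mem_filter] at hx hy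
        have hxCs : x ∈ Cs := hO'Cs x ((hSmem x).mp hx.1).1
        exact ((hSmem y).mp hy.1).2 x hxCs (by rw [hx.2, hy.2])
      exact le_trans (Finset.card_le_card hsubf) (le_trans c1 one_le_two)
    · have hsubf : (O'.filter fun o => a = pr o) ⊆ (O' \ S).filter fun x => g x = a := by
        intro o ho
        rw [Finset.mem_filter] at ho
        by_cases hS : o ∈ S
        · exfalso
          apply haImg
          have h2 := ho.2
          rw [hpr o, if_pos hS] at h2
          rw [h2]
          exact Finset.mem_image_of_mem eta (hO'Cs o ho.1)
        · refine Finset.mem_filter.mpr ⟨Finset.mem_sdiff.mpr ⟨ho.1, hS⟩, ?_⟩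
          have h2 := ho.2
          rw [hpr o, if_neg hS] at h2
          exact h2.symm
      exact le_trans (Finset.card_le_card hsubf) (hgmult a)
  -- the swap inequality
  have hswap : ∀ o ∈ O', (1 - ε) * cost C <
      ∑ i, w i * (dC i + (if oS i = o then dS i - dC i else 0) +
        (if cC i = pr o then 2 * dS i else 0)) := by
    intro o ho
    obtain ⟨hoCs, hoC, -⟩ := (hO'mem o).mp ho
    have hbX : o ∈ X \ C := Finset.mem_sdiff.mpr ⟨hCsX hoCs, hoC⟩
    have haC : pr o ∈ C := hprC o ho
    obtain ⟨q, hqd⟩ : ∃ f : Fin n → Y, ∀ i, f i =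
        if oS i = o then o else if cC i = pr o then eta (oS i) else cC i := ⟨_, fun _ => rfl⟩
    have hq : ∀ i, q i ∈ insert o (C.erase (pr o)) := by
      intro i
      rw [hqd i]
      by_cases h1 : oS i = o
      · rw [if_pos h1]; exact Finset.mem_insert_self o _
      · rw [if_neg h1]
        by_cases h2 : cC i = pr o
        · rw [if_pos h2]
          refine Finset.mem_insert_of_mem (Finset.mem_erase.mpr ⟨?_, hetaC (oS i)⟩)
          intro heq
          exact h1 (hprB o ho (oS i) (hoSmem i) heq)
        · rw [if_neg h2]
          exact Finset.mem_insert_of_mem (Finset.mem_erase.mpr ⟨h2, hcCmem i⟩)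
    calc (1 - ε) * cost C < cost (insert o (C.erase (pr o))) := hlocal (pr o) haC o hbX
      _ ≤ ∑ i, w i * dist (p i) (q i) := hub _ q hq
      _ ≤ _ := by
        apply Finset.sum_le_sum
        intro i _
        refine mul_le_mul_of_nonneg_left ?_ (hw i)
        rw [hqd i]
        by_cases h1 : oS i = o
        · rw [if_pos h1, if_pos h1]
          have he : dist (p i) o = dS i := by rw [hdS i, h1]
          by_cases h2 : cC i = pr o
          · rw [if_pos h2]
            have := hdSnn i
            linarith [he.le]
          · rw [if_neg h2]
            linarith [he.le]
        · rw [if_neg h1, if_neg h1]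
          by_cases h2 : cC i = pr o
          · rw [if_pos h2, if_pos h2]
            have t1 : dist (p i) (eta (oS i)) ≤ dist (p i) (oS i) + dist (oS i) (eta (oS i)) :=
              dist_triangle _ _ _
            have t2 : dist (oS i) (eta (oS i)) ≤ dist (oS i) (cC i) :=
              hetaMin (oS i) (cC i) (hcCmem i)
            have t3 : dist (oS i) (cC i) ≤ dist (oS i) (p i) + dist (p i) (cC i) :=
              dist_triangle _ _ _
            have t4 : dist (oS i) (p i) = dist (p i) (oS i) := dist_comm _ _
            rw [hdC i, hdS i]
            linarith
          · rw [if_neg h2, if_neg h2]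
            rw [hdC i]
            linarith
  -- oS i outside O' means oS i ∈ C
  have hOSC : ∀ i : Fin n, oS i ∉ O' → oS i ∈ C := by
    intro i hni
    by_contra hnC
    exact hni ((hO'mem (oS i)).mpr ⟨hoSmem i, hnC, ⟨i, rfl⟩⟩)
  have hdCdS : ∀ i : Fin n, oS i ∈ C → dC i ≤ dS i := by
    intro i hmem
    rw [hdC i, hdS i]
    exact hcCmin i (oS i) hmem
  rcases Finset.eq_empty_or_nonempty O' with hO'e | hO'ne
  · -- no swaps needed: cost C ≤ OPT
    have hle : cost C ≤ OPT := by
      rw [hcostC, hcostS]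
      apply Finset.sum_le_sum
      intro i _
      refine mul_le_mul_of_nonneg_left ?_ (hw i)
      apply hdCdS
      apply hOSC
      rw [hO'e]
      exact Finset.notMem_empty _
    have hfac : 1 ≤ 5 / (1 - (n : ℝ) * ε) := by
      have hnn : 0 ≤ (n : ℝ) * ε := mul_nonneg (Nat.cast_nonneg n) hε.le
      rw [le_div_iff₀ h1pos]; linarith
    calc cost C ≤ OPT := hle
      _ = 1 * OPT := (one_mul OPT).symm
      _ ≤ (5 / (1 - (n : ℝ) * ε)) * OPT := mul_le_mul_of_nonneg_right hfac hOPTnn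
  · have hsumlt := Finset.sum_lt_sum_of_nonempty hO'ne hswap
    have hlhs : ∑ _o ∈ O', ((1 - ε) * cost C) = (O'.card : ℝ) * ((1 - ε) * cost C) := by
      rw [Finset.sum_const, nsmul_eq_mul]
    have hrhs : ∑ o ∈ O', ∑ i, w i * (dC i + (if oS i = o then dS i - dC i else 0) +
        (if cC i = pr o then 2 * dS i else 0))
        ≤ (O'.card : ℝ) * cost C + 5 * OPT - cost C := by
      rw [Finset.sum_comm]
      have hper : ∀ i : Fin n, ∑ o ∈ O', w i * (dC i + (if oS i = o then dS i - dC i else 0) +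
          (if cC i = pr o then 2 * dS i else 0))
          ≤ (O'.card : ℝ) * (w i * dC i) + (w i * dS i - w i * dC i) + 4 * (w i * dS i) := by
        intro i
        have hA : ∑ o ∈ O', (if oS i = o then dS i - dC i else 0) ≤ dS i - dC i := by
          rw [Finset.sum_ite_eq O' (oS i) (fun _ => dS i - dC i)]
          by_cases hm : oS i ∈ O'
          · rw [if_pos hm]
          · rw [if_neg hm]
            have := hdCdS i (hOSC i hm)
            linarith
        have hB : ∑ o ∈ O', (if cC i = pr o then 2 * dS i else 0) ≤ 4 * dS i := by
          rw [Finset.sum_ite, Finset.sum_const_zero, add_zero, Finset.sum_const, nsmul_eq_mul]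
          have hc : ((O'.filter fun o => cC i = pr o).card : ℝ) ≤ 2 := by
            exact_mod_cast hprmult (cC i)
          nlinarith [hdSnn i]
        have hCsum : ∑ _o ∈ O', dC i = (O'.card : ℝ) * dC i := by
          rw [Finset.sum_const, nsmul_eq_mul]
        calc ∑ o ∈ O', w i * (dC i + (if oS i = o then dS i - dC i else 0) +
              (if cC i = pr o then 2 * dS i else 0))
            = w i * ∑ o ∈ O', (dC i + (if oS i = o then dS i - dC i else 0) +
              (if cC i = pr o then 2 * dS i else 0)) := by rw [Finset.mul_sum]
          _ ≤ w i * ((O'.card : ℝ) * dC i + (dS i - dC i) + 4 * dS i) := by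
              apply mul_le_mul_of_nonneg_left _ (hw i)
              rw [Finset.sum_add_distrib, Finset.sum_add_distrib, hCsum]
              linarith
          _ = (O'.card : ℝ) * (w i * dC i) + (w i * dS i - w i * dC i) + 4 * (w i * dS i) := by
              ring
      calc ∑ i, ∑ o ∈ O', w i * (dC i + (if oS i = o then dS i - dC i else 0) +
            (if cC i = pr o then 2 * dS i else 0))
          ≤ ∑ i, ((O'.card : ℝ) * (w i * dC i) + (w i * dS i - w i * dC i) + 4 * (w i * dS i)) :=
            Finset.sum_le_sum fun i _ => hper i
        _ = (O'.card : ℝ) * (∑ i, w i * dC i) + ((∑ i, w i * dS i) - (∑ i, w i * dC i))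
            + 4 * (∑ i, w i * dS i) := by
            rw [Finset.sum_add_distrib, Finset.sum_add_distrib, Finset.sum_sub_distrib,
              ← Finset.mul_sum, ← Finset.mul_sum]
        _ = (O'.card : ℝ) * cost C + 5 * OPT - cost C := by
            rw [← hcostC, ← hcostS]; ring
    have hmain : (O'.card : ℝ) * ((1 - ε) * cost C)
        < (O'.card : ℝ) * cost C + 5 * OPT - cost C := by
      rw [← hlhs]
      exact lt_of_lt_of_le hsumlt hrhs
    have hcardn : (O'.card : ℝ) ≤ (n : ℝ) := by exact_mod_cast hO'n
    have hkey : (1 - (n : ℝ) * ε) * cost C ≤ 5 * OPT := by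
      nlinarith [mul_nonneg (mul_nonneg (sub_nonneg.mpr hcardn) hε.le) hcostCnn]
    rw [div_mul_eq_mul_div, le_div_iff₀ h1pos]
    linarith
end

section
/- Let n ≥ 2, let 1 ≤ k ≤ m, and let C ⊆ X with |C| = k be a set of centers with cost(C) > (5/(1 − 1/n))·OPT_k. Then there exists a swap C' of C with cost(C') ≤ (1 − 1/n²)·cost(C). -/
/-!
Local search analysis in the style of Arya et al. Shrink an optimal solution `O` to the at most
`n` centres that serve some demand point. Pair every `o ∈ O` with a current centre `φ o` that is the
nearest current centre of no other optimal centre, using no current centre more than twice. In the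
swap `φ o ↦ o` the points served by `o` move to `o`, and every other point served by `φ o` moves to
the current centre nearest its optimal centre, paying at most twice its optimal distance extra.
Summing over the swaps, the total change of cost is at most `5·OPT − cost C < −cost C / n`, so
one of the at most `n` swaps gains at least `cost C / n²`.
-/

open Finset Metric

namespace Finset

theorem exists_mapsTo_card_filter_le_two {α β : Type*} [DecidableEq β] [Nonempty β]
    {B : Finset α} {D : Finset β} (h : #B ≤ 2 * #D) :
    ∃ ψ : α → β, (∀ b ∈ B, ψ b ∈ D) ∧ ∀ d, #{b ∈ B | ψ b = d} ≤ 2 := by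
  classical
  obtain ⟨f⟩ : Nonempty (B ↪ D × Fin 2) :=
    Function.Embedding.nonempty_of_card_le (by simpa [mul_comm] using h)
  let ψ : α → β := fun b => if hb : b ∈ B then (f ⟨b, hb⟩).1 else Classical.arbitrary β
  refine ⟨ψ, fun b hb => by simp [ψ, hb], fun d => ?_⟩
  calc #{b ∈ B | ψ b = d}
      ≤ #(univ : Finset (Fin 2)) := by
        refine card_le_card_of_injOn (fun b => if hb : b ∈ B then (f ⟨b, hb⟩).2 else 0)
          (fun _ _ => mem_univ _) ?_
        intro b₁ hb₁ b₂ hb₂ h₂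
        simp only [coe_filter, Set.mem_ofPred_eq] at hb₁ hb₂
        obtain ⟨hb₁, rfl⟩ := hb₁
        obtain ⟨hb₂, h₁⟩ := hb₂
        simp only [ψ, hb₁, hb₂, dite_true] at h₁ h₂
        simpa using f.injective (Prod.ext (Subtype.ext h₁.symm) h₂)
    _ = 2 := by simp

theorem card_filter_exists_ne_add_two_mul_card_image_le {α β : Type*} [DecidableEq α]
    [DecidableEq β] (O : Finset α) (η : α → β) :
    #{b ∈ O | ∃ o ∈ O, o ≠ b ∧ η o = η b} + 2 * #(O.image η) ≤ 2 * #O := by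
  set B := {b ∈ O | ∃ o ∈ O, o ≠ b ∧ η o = η b}
  have hfiber : ∀ c ∈ O.image η, #{b ∈ B | η b = c} + 2 ≤ 2 * #{b ∈ O | η b = c} := by
    intro c hc
    obtain ⟨o₀, ho₀, rfl⟩ := mem_image.mp hc
    have hsub : #{b ∈ B | η b = η o₀} ≤ #{b ∈ O | η b = η o₀} :=
      card_le_card (filter_subset_filter _ (filter_subset _ _))
    have hpos : 0 < #{b ∈ O | η b = η o₀} := card_pos.mpr ⟨o₀, by simp [ho₀]⟩
    rcases eq_empty_or_nonempty {b ∈ B | η b = η o₀} with hempty | ⟨b, hb⟩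
    · rw [hempty, card_empty]; omega
    · simp only [B, mem_filter] at hb
      obtain ⟨⟨hbO, o, hoO, hob, hηo⟩, hηb⟩ := hb
      have htwo : 1 < #{b ∈ O | η b = η o₀} :=
        one_lt_card.mpr ⟨o, by simp [hoO, hηo, hηb], b, by simp [hbO, hηb], hob⟩
      omega
  calc #B + 2 * #(O.image η)
      = ∑ c ∈ O.image η, (#{b ∈ B | η b = c} + 2) := by
        rw [sum_add_distrib, sum_const, smul_eq_mul, mul_comm,
          card_eq_sum_card_fiberwise fun b hb => mem_image_of_mem η (filter_subset _ _ hb)]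
    _ ≤ ∑ c ∈ O.image η, 2 * #{b ∈ O | η b = c} := sum_le_sum hfiber
    _ = 2 * #O := by
        rw [← mul_sum, ← card_eq_sum_card_fiberwise fun b hb => mem_image_of_mem η hb]

theorem exists_capturing_pairing {α β : Type*} [DecidableEq α] [DecidableEq β] [Nonempty β]
    {O : Finset α} {C : Finset β} (η : α → β) (hη : ∀ o ∈ O, η o ∈ C) (hOC : #O ≤ #C) :
    ∃ φ : α → β, (∀ b ∈ O, φ b ∈ C) ∧ (∀ b ∈ O, ∀ o ∈ O, o ≠ b → η o ≠ φ b) ∧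
      ∀ c, #{b ∈ O | φ b = c} ≤ 2 := by
  set B := {b ∈ O | ∃ o ∈ O, o ≠ b ∧ η o = η b}
  set D := C \ O.image η
  have hBD : #B ≤ 2 * #D := by
    have h₁ : #B + 2 * #(O.image η) ≤ 2 * #O :=
      card_filter_exists_ne_add_two_mul_card_image_le O η
    have h₂ := card_le_card (image_subset_iff.mpr hη)
    rw [card_sdiff_of_subset (image_subset_iff.mpr hη)]
    omega
  -- Centres with a private `η`-image are sent there; those in `B` share their image and are sent
  -- at most two-to-one into `D`, the centres that are nobody's `η`-image.
  obtain ⟨ψ, hψD, hψ⟩ := exists_mapsTo_card_filter_le_two hBD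
  have hψ_ne : ∀ b ∈ B, ∀ o ∈ O, η o ≠ ψ b := fun b hb o ho h =>
    (mem_sdiff.mp (hψD b hb)).2 (h ▸ mem_image_of_mem η ho)
  have hprivate : ∀ b ∈ O, b ∉ B → ∀ o ∈ O, o ≠ b → η o ≠ η b := fun b hb hbB o ho hob h =>
    hbB (mem_filter.mpr ⟨hb, o, ho, hob, h⟩)
  refine ⟨fun b => if b ∈ B then ψ b else η b, fun b hb => ?_, fun b hb o ho hob => ?_, fun c => ?_⟩
  · dsimp only
    split_ifs with hbB
    exacts [(mem_sdiff.mp (hψD b hbB)).1, hη b hb]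
  · dsimp only
    split_ifs with hbB
    exacts [hψ_ne b hbB o ho, hprivate b hb hbB o ho hob]
  · by_cases hc : c ∈ D
    · refine (card_le_card fun b hb => ?_).trans (hψ c)
      simp only [mem_filter] at hb ⊢
      obtain ⟨hbO, hbc⟩ := hb
      split_ifs at hbc with hbB
      · exact ⟨hbB, hbc⟩
      · exact absurd (hbc ▸ mem_image_of_mem η hbO) (mem_sdiff.mp hc).2
    · refine (card_le_one.mpr fun b₁ hb₁ b₂ hb₂ => ?_).trans one_le_two
      simp only [mem_filter] at hb₁ hb₂
      obtain ⟨hb₁O, hb₁c⟩ := hb₁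
      obtain ⟨hb₂O, hb₂c⟩ := hb₂
      split_ifs at hb₁c hb₂c with hb₁B hb₂B hb₂B <;> subst hb₁c
      · exact absurd (hψD b₁ hb₁B) hc
      · exact absurd (hψD b₁ hb₁B) hc
      · exact absurd (hb₂c ▸ hψD b₂ hb₂B) hc
      · by_contra hne
        exact hprivate b₁ hb₁O hb₁B b₂ hb₂O (Ne.symm hne) hb₂c

theorem exists_lt_neg_div_of_sum_lt {α : Type*} {s : Finset α} {f : α → ℝ} {c N : ℝ}
    (hc : 0 ≤ c) (hN : (#s : ℝ) ≤ N) (h : ∑ x ∈ s, f x < -c) : ∃ x ∈ s, f x < -(c / N) := by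
  refine exists_lt_of_sum_lt (h.trans_le ?_)
  rw [sum_const, nsmul_eq_mul, mul_neg, neg_le_neg_iff]
  rcases ((Nat.cast_nonneg _).trans hN).eq_or_lt with rfl | hN0
  · simpa using hc
  · calc (#s : ℝ) * (c / N) ≤ N * (c / N) := by gcongr
      _ = c := mul_div_cancel₀ c hN0.ne'

end Finset

section KMedian

variable {Y : Type*} [PseudoMetricSpace Y]

theorem sInf_image_dist_eq_infDist (x : Y) (s : Set Y) :
    sInf ((fun c => dist x c) '' s) = infDist x s := by
  rw [sInf_image', infDist_eq_iInf]

theorem Finset.Nonempty.exists_mem_infDist_eq_dist {s : Finset Y} (hs : s.Nonempty) (x : Y) :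
    ∃ y ∈ s, infDist x s = dist x y :=
  s.finite_toSet.isCompact.exists_infDist_eq_dist (coe_nonempty.mpr hs) x

theorem dist_le_two_mul_dist_add_infDist {C : Set Y} {x o e : Y} (hoe : infDist o C = dist o e) :
    dist x e ≤ 2 * dist x o + infDist x C :=
  calc dist x e ≤ dist x o + infDist o C := hoe ▸ dist_triangle x o e
    _ ≤ dist x o + (infDist x C + dist o x) := by grw [infDist_le_infDist_add_dist]
    _ = 2 * dist x o + infDist x C := by rw [dist_comm o x]; ring

theorem infDist_insert_erase_le [DecidableEq Y] {C : Finset Y} {x o a b c e : Y} (hc : c ∈ C)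
    (hxc : infDist x C = dist x c) (he : e ∈ C) (hoe : infDist o C = dist o e)
    (hea : o ≠ b → e ≠ a) :
    infDist x ↑(insert b (C.erase a)) ≤ infDist x C +
      ((if o = b then dist x o - infDist x C else 0) + if a = c then 2 * dist x o else 0) := by
  have hsnd : 0 ≤ if a = c then 2 * dist x o else 0 := by positivity
  by_cases hob : o = b
  · subst hob
    have := infDist_le_dist_of_mem (x := x) (mem_coe.mpr (mem_insert_self o (C.erase a)))
    simp only [if_true]
    linarith
  by_cases hca : a = c
  · have hmem : e ∈ insert b (C.erase a) := mem_insert_of_mem (mem_erase.mpr ⟨hea hob, he⟩)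
    have := (infDist_le_dist_of_mem (x := x) (mem_coe.mpr hmem)).trans
      (dist_le_two_mul_dist_add_infDist hoe)
    rw [if_neg hob, if_pos hca]
    linarith
  · have hmem : c ∈ insert b (C.erase a) :=
      mem_insert_of_mem (mem_erase.mpr ⟨Ne.symm hca, hc⟩)
    have := infDist_le_dist_of_mem (x := x) (mem_coe.mpr hmem)
    rw [if_neg hob, if_neg hca]
    linarith

variable {ι : Type*} [Fintype ι]

noncomputable def medianCost (p : ι → Y) (w : ι → ℝ) (C : Finset Y) : ℝ :=
  ∑ i, w i * infDist (p i) C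

variable (p : ι → Y) {w : ι → ℝ}

theorem medianCost_nonneg (hw : ∀ i, 0 ≤ w i) (C : Finset Y) : 0 ≤ medianCost p w C :=
  sum_nonneg fun i _ => mul_nonneg (hw i) infDist_nonneg

theorem medianCost_insert_erase_sub_le [DecidableEq Y] (hw : ∀ i, 0 ≤ w i) {C O : Finset Y}
    {σ τ : ι → Y} {η : Y → Y} {a b : Y} (hσC : ∀ i, σ i ∈ C)
    (hσ : ∀ i, infDist (p i) C = dist (p i) (σ i)) (hτ : ∀ i, infDist (p i) O = dist (p i) (τ i))
    (hηC : ∀ y, η y ∈ C) (hη : ∀ y, infDist y C = dist y (η y))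
    (hηa : ∀ i, τ i ≠ b → η (τ i) ≠ a) :
    medianCost p w (insert b (C.erase a)) - medianCost p w C ≤
      ∑ i, w i * ((if τ i = b then infDist (p i) O - infDist (p i) C else 0) +
        if a = σ i then 2 * infDist (p i) O else 0) := by
  rw [medianCost, medianCost, ← sum_sub_distrib]
  refine sum_le_sum fun i _ => ?_
  rw [← mul_sub]
  refine mul_le_mul_of_nonneg_left ?_ (hw i)
  have := infDist_insert_erase_le (hσC i) (hσ i) (hηC (τ i)) (hη (τ i)) (hηa i)
  rw [← hτ i] at this
  linarith

theorem exists_sum_medianCost_swap_sub_le [DecidableEq Y] (hw : ∀ i, 0 ≤ w i)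
    {C O : Finset Y} (hO : O.Nonempty) (hOC : #O ≤ #C) :
    ∃ φ : Y → Y, (∀ b ∈ O, φ b ∈ C) ∧
      ∑ b ∈ O \ C, (medianCost p w (insert b (C.erase (φ b))) - medianCost p w C) ≤
        5 * medianCost p w O - medianCost p w C := by
  have hC : C.Nonempty := card_pos.mp ((card_pos.mpr hO).trans_le hOC)
  have : Nonempty Y := hC.to_subtype.map Subtype.val
  choose σ hσC hσ using fun i => hC.exists_mem_infDist_eq_dist (p i)
  choose τ hτO hτ using fun i => hO.exists_mem_infDist_eq_dist (p i)
  choose η hηC hη using hC.exists_mem_infDist_eq_dist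
  obtain ⟨φ, hφC, hφη, hφ⟩ := exists_capturing_pairing η (fun o _ => hηC o) hOC
  refine ⟨φ, hφC, ?_⟩
  set dC := fun i => infDist (p i) C
  set dO := fun i => infDist (p i) O
  set Δ := fun i b => (if τ i = b then dO i - dC i else 0) + if φ b = σ i then 2 * dO i else 0
  -- Point `i` pays `dO i - dC i` only in the swap bringing in its optimal centre, and `2 * dO i`
  -- only in the at most two swaps removing its current centre.
  have hcount : ∀ i, ∑ b ∈ O \ C, Δ i b ≤ 5 * dO i - dC i := by
    intro i
    have hdO : 0 ≤ dO i := infDist_nonneg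
    have hfst : ∑ b ∈ O \ C, (if τ i = b then dO i - dC i else 0) ≤ dO i - dC i := by
      rw [sum_ite_eq]
      split_ifs with hτi
      · rfl
      · have hτC : τ i ∈ C := by simpa [hτO i] using hτi
        have := infDist_le_dist_of_mem (x := p i) (mem_coe.mpr hτC)
        simp only [dC, dO, hτ i]
        linarith
    have hsnd : ∑ b ∈ O \ C, (if φ b = σ i then 2 * dO i else 0) ≤ 4 * dO i := by
      rw [← sum_filter, sum_const, nsmul_eq_mul]
      have : #{b ∈ O \ C | φ b = σ i} ≤ 2 :=
        (card_le_card (filter_subset_filter _ sdiff_subset)).trans (hφ (σ i))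
      have : (#{b ∈ O \ C | φ b = σ i} : ℝ) ≤ 2 := by exact_mod_cast this
      nlinarith
    simp only [Δ, sum_add_distrib]
    linarith
  calc ∑ b ∈ O \ C, (medianCost p w (insert b (C.erase (φ b))) - medianCost p w C)
      ≤ ∑ b ∈ O \ C, ∑ i, w i * Δ i b := sum_le_sum fun b hb =>
        medianCost_insert_erase_sub_le p hw hσC hσ hτ hηC hη
          fun i => hφη b (sdiff_subset hb) (τ i) (hτO i)
    _ = ∑ i, w i * ∑ b ∈ O \ C, Δ i b := by rw [sum_comm]; simp only [mul_sum]
    _ ≤ ∑ i, w i * (5 * dO i - dC i) :=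
        sum_le_sum fun i _ => mul_le_mul_of_nonneg_left (hcount i) (hw i)
    _ = 5 * medianCost p w O - medianCost p w C := by
        simp only [medianCost, mul_sum, ← sum_sub_distrib, dO, dC]
        exact sum_congr rfl fun i _ => by ring

theorem exists_subset_card_le_fintype_medianCost_le [Nonempty ι] [DecidableEq Y]
    (hw : ∀ i, 0 ≤ w i) {O : Finset Y} (hO : O.Nonempty) :
    ∃ T ⊆ O, T.Nonempty ∧ #T ≤ Fintype.card ι ∧ medianCost p w T ≤ medianCost p w O := by
  choose τ hτO hτ using fun i => hO.exists_mem_infDist_eq_dist (p i)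
  refine ⟨univ.image τ, image_subset_iff.mpr fun i _ => hτO i, univ_nonempty.image τ,
    card_image_le, sum_le_sum fun i _ => mul_le_mul_of_nonneg_left ?_ (hw i)⟩
  exact (infDist_le_dist_of_mem (mem_coe.mpr (mem_image_of_mem τ (mem_univ i)))).trans_eq
    (hτ i).symm

end KMedian

theorem kmedian_improving_swap_general
    {Y : Type*} [MetricSpace Y] [DecidableEq Y]
    (X : Finset Y)
    (n : ℕ) (hn : 2 ≤ n) (p : Fin n → Y) (w : Fin n → ℝ) (hw : ∀ i, 0 ≤ w i)
    (cost : Finset Y → ℝ)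
    (hcost : ∀ C : Finset Y,
      cost C = ∑ i, w i * sInf ((fun c => dist (p i) c) '' (C : Set Y)))
    (k : ℕ) (hk1 : 1 ≤ k)
    (OPT : ℝ)
    (hOPT : IsLeast {v : ℝ | ∃ C' : Finset Y, C' ⊆ X ∧ C'.card = k ∧ cost C' = v} OPT)
    (C : Finset Y) (hCk : C.card = k)
    (hbad : (5 / (1 - 1 / (n : ℝ))) * OPT < cost C) :
    ∃ a ∈ C, ∃ b ∈ X \ C,
      cost (insert b (C.erase a)) ≤ (1 - 1 / (n : ℝ) ^ 2) * cost C := by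
  have hcost_eq : cost = medianCost p w := funext fun s => by
    simp only [hcost, medianCost, sInf_image_dist_eq_infDist]
  subst hcost_eq
  obtain ⟨⟨O, hOX, hOk, rfl⟩, -⟩ := hOPT
  have : Nonempty (Fin n) := ⟨⟨0, by omega⟩⟩
  obtain ⟨T, hTO, hT, hTn, hTcost⟩ :=
    exists_subset_card_le_fintype_medianCost_le p hw (card_pos.mp (hOk ▸ hk1))
  obtain ⟨φ, hφC, hsum⟩ :=
    exists_sum_medianCost_swap_sub_le p hw hT ((card_le_card hTO).trans (hOk.trans hCk.symm).le)
  have hgap : 5 * medianCost p w T - medianCost p w C < -(medianCost p w C / n) := by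
    have hn' : 0 < 1 - 1 / (n : ℝ) := by
      rw [sub_pos, div_lt_one (by exact_mod_cast (by omega : 0 < n))]
      exact_mod_cast (by omega : 1 < n)
    rw [div_mul_eq_mul_div, div_lt_iff₀ hn', mul_one_sub, mul_one_div] at hbad
    linarith
  have hcard : (#(T \ C) : ℝ) ≤ n := by
    exact_mod_cast (card_le_card sdiff_subset).trans (hTn.trans_eq (Fintype.card_fin n))
  obtain ⟨b, hb, hlt⟩ := exists_lt_neg_div_of_sum_lt
    (div_nonneg (medianCost_nonneg p hw C) n.cast_nonneg) hcard (hsum.trans_lt hgap)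
  obtain ⟨hbT, hbC⟩ := mem_sdiff.mp hb
  refine ⟨φ b, hφC b hbT, b, mem_sdiff.mpr ⟨hOX (hTO hbT), hbC⟩, ?_⟩
  linarith [show (1 - 1 / (n : ℝ) ^ 2) * medianCost p w C =
    medianCost p w C - medianCost p w C / n / n by ring]

/-- Improving swap for uncertain `k`-median clustering: if `n ≥ 2` and the center set
`C` has `cost(C) > (5/(1 − 1/n))·OPT_k`, then some single swap `C' = (C \ {a}) ∪ {b}`
with `a ∈ C`, `b ∈ X \ C` satisfies `cost(C') ≤ (1 − 1/n²)·cost(C)`. -/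
theorem kmedian_improving_swap
    {Y : Type*} [MetricSpace Y] [DecidableEq Y]
    (X : Finset Y) (m : ℕ) (hm : X.card = m)
    (n : ℕ) (hn : 2 ≤ n) (p : Fin n → Y) (w : Fin n → ℝ) (hw : ∀ i, 0 ≤ w i)
    (cost : Finset Y → ℝ)
    (hcost : ∀ C : Finset Y,
      cost C = ∑ i, w i * sInf ((fun c => dist (p i) c) '' (C : Set Y)))
    (k : ℕ) (hk1 : 1 ≤ k) (hkm : k ≤ m)
    (OPT : ℝ)
    (hOPT : IsLeast {v : ℝ | ∃ C' : Finset Y, C' ⊆ X ∧ C'.card = k ∧ cost C' = v} OPT)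
    (C : Finset Y) (hC : C ⊆ X) (hCk : C.card = k)
    (hbad : (5 / (1 - 1 / (n : ℝ))) * OPT < cost C) :
    ∃ a ∈ C, ∃ b ∈ X \ C,
      cost (insert b (C.erase a)) ≤ (1 - 1 / (n : ℝ) ^ 2) * cost C :=
  kmedian_improving_swap_general X n hn p w hw cost hcost k hk1 OPT hOPT C hCk hbad
end
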